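/- arXiv:0907.1304 — 2 statements merged into one kernel-verified Lean document; each statement's English description precedes it below -/
import Mathlib

section
/- Let Ω ⊆ ℂⁿ be open with C² defining function ρ, let M ∈ ∂Ω, and suppose there exists Z ∈ ℂⁿ with ∑_j ∂ρ/∂z_j(M) Z_j = 0 and ∑_{j,k} ∂²ρ/∂z_j∂z̄_k(M) Z_j Z̄_k < 0 (i.e., M is a point of non-Levi-pseudoconvexity). Then there exists a complex affine subspace h of complex dimension two containing M such that the slice Ω_h ⊆ ℂ² is not Levi pseudoconvex at φ⁻¹(M): ρ∘φ is a local C² defining function for Ω_h near φ⁻¹(M), and its Levi form at φ⁻¹(M) is negative on some complex tangent vector. -/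
open Complex Metric
open scoped ComplexOrder

noncomputable section

/-- The Wirtinger derivative `∂f/∂z_j` of a complex-valued function on `ℂⁿ` at `p`. -/
def wDz {n : ℕ} (j : Fin n) (f : (Fin n → ℂ) → ℂ) (p : Fin n → ℂ) : ℂ :=
  (fderiv ℝ f p (Pi.single j 1) - Complex.I * fderiv ℝ f p (Pi.single j Complex.I)) / 2

/-- The conjugate Wirtinger derivative `∂f/∂z̄_j`. -/
def wDzBar {n : ℕ} (j : Fin n) (f : (Fin n → ℂ) → ℂ) (p : Fin n → ℂ) : ℂ :=
  (fderiv ℝ f p (Pi.single j 1) + Complex.I * fderiv ℝ f p (Pi.single j Complex.I)) / 2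

/-- The mixed second Wirtinger derivative `∂²ρ/∂z_j∂z̄_k` of a real-valued function. -/
def leviEntry {n : ℕ} (j k : Fin n) (ρ : (Fin n → ℂ) → ℝ) (p : Fin n → ℂ) : ℂ :=
  wDz j (fun z => wDzBar k (fun w => (ρ w : ℂ)) z) p

/-- The Levi form `∑_{j,k} ∂²ρ/∂z_j∂z̄_k(p) Z_j Z̄_k`. -/
def leviForm {n : ℕ} (ρ : (Fin n → ℂ) → ℝ) (p : Fin n → ℂ) (Z : Fin n → ℂ) : ℂ :=
  ∑ j, ∑ k, leviEntry j k ρ p * Z j * (starRingEnd ℂ) (Z k)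

/-- `∑_j ∂ρ/∂z_j(p) Z_j`; `Z` is a complex tangent vector at `p` iff this vanishes. -/
def tangentSum {n : ℕ} (ρ : (Fin n → ℂ) → ℝ) (p : Fin n → ℂ) (Z : Fin n → ℂ) : ℂ :=
  ∑ j, wDz j (fun w => (ρ w : ℂ)) p * Z j

/-- Pseudoconvexity via the Kontinuitätssatz: for every family of analytic discs in `U`
whose boundaries lie in a single compact subset of `U`, the discs themselves lie in a
single compact subset of `U`. -/
def Pseudoconvex {E : Type*} [NormedAddCommGroup E] [NormedSpace ℂ E] (U : Set E) : Prop :=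
  ∀ (A : Type) (d : A → ℂ → E),
    (∀ α, ContinuousOn (d α) (closedBall 0 1) ∧ DifferentiableOn ℂ (d α) (ball 0 1) ∧
      d α '' closedBall 0 1 ⊆ U) →
    ∀ K : Set E, IsCompact K → K ⊆ U → (∀ α, d α '' sphere 0 1 ⊆ K) →
    ∃ K', IsCompact K' ∧ K' ⊆ U ∧ ∀ α, d α '' closedBall 0 1 ⊆ K'

/-- The affine parametrization `φ(w) = a + w₁ b + w₂ c` of a 2-dimensional affine subspace. -/
def aff {n : ℕ} (a b c : Fin n → ℂ) : (Fin 2 → ℂ) → (Fin n → ℂ) :=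
  fun w => a + w 0 • b + w 1 • c

/-- `ρ` is a `C²` defining function for the open set `Ω`. -/
def IsDefiningFunction {n : ℕ} (ρ : (Fin n → ℂ) → ℝ) (Ω : Set (Fin n → ℂ)) : Prop :=
  ContDiff ℝ 2 ρ ∧ Ω = {z | ρ z < 0} ∧ frontier Ω = {z | ρ z = 0} ∧
    ∀ z ∈ frontier Ω, fderiv ℝ ρ z ≠ 0

/-- A real-valued quadratic polynomial: a real polynomial of total degree at most 2. -/
def IsQuadratic {E : Type*} [NormedAddCommGroup E] [NormedSpace ℝ E] (q : E → ℝ) : Prop :=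
  ∃ (B : E →L[ℝ] E →L[ℝ] ℝ) (L : E →L[ℝ] ℝ) (c₀ : ℝ), ∀ z, q z = B z z + L z + c₀

/-!
The Wirtinger operators `∂f(p)` and `∂̄f(p)` are the `ℂ`-linear and `ℂ`-antilinear parts of the
real differential. In these terms the tangency condition is `∂ρ(M) Z = 0` and the Levi form is
`∂(∂̄ρ(·) Z)(M) Z`, so both are intrinsic and are transported by the chain rule under a
complex-affine map `φ(w) = a + T w`: for `ρ ∘ φ` at `p` in direction `ζ` they equal those of `ρ`
at `φ p` in direction `T ζ`.

Slice through `M` along `b` and `Z`, where `b` is any direction with `dρ(M) b ≠ 0` (the paper's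
normal direction `M - p₀` is one). Since `dρ = 2 Re ∂ρ`, `∂ρ(M)` vanishes on `Z` but not on `b`,
which makes `b, Z` independent; `ρ ∘ φ` has nonzero differential in the first coordinate, and
`ζ = (0, 1)` is a complex tangent vector at which the Levi form of `ρ ∘ φ` equals that of `ρ` at
`Z`.
-/

theorem Pi.single_eq_smul_single_one {ι R : Type*} [DecidableEq ι] [Semiring R] (i : ι) (r : R) :
    Pi.single i r = r • Pi.single i (1 : R) := by
  rw [← Pi.single_smul', smul_eq_mul, mul_one]

theorem LinearIndependent.pair_of_apply_ne_zero_of_apply_eq_zero {K V : Type*} [Field K]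
    [AddCommGroup V] [Module K V] (f : V →ₗ[K] K) {x y : V} (hx : f x ≠ 0) (hy : f y = 0)
    (hy0 : y ≠ 0) : LinearIndependent K ![x, y] := by
  rw [LinearIndependent.pair_iff]
  intro s t hst
  obtain rfl : s = 0 := by simpa [hx, hy] using congrArg f hst
  simpa [hy0] using hst

section Wirtinger

variable {E F : Type*} [NormedAddCommGroup E] [NormedSpace ℂ E]
  [NormedAddCommGroup F] [NormedSpace ℂ F]

theorem ContinuousLinearMap.apply_complex_smul (L : E →L[ℝ] ℂ) (c : ℂ) (v : E) :
    L (c • v) = c.re * L v + c.im * L (I • v) := by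
  conv_lhs => rw [← re_add_im c]
  rw [add_smul, mul_smul, coe_smul, coe_smul, map_add, L.map_smul, L.map_smul,
    real_smul, real_smul]

def wirtingerD (f : E → ℂ) (p : E) : E →ₗ[ℂ] ℂ where
  toFun v := (fderiv ℝ f p v - I * fderiv ℝ f p (I • v)) / 2
  map_add' v w := by simp only [smul_add, map_add]; ring
  map_smul' c v := by
    rw [smul_comm, (fderiv ℝ f p).apply_complex_smul c v,
      (fderiv ℝ f p).apply_complex_smul c (I • v), smul_smul, I_mul_I, neg_one_smul,
      map_neg, RingHom.id_apply, smul_eq_mul]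
    conv_rhs => rw [← re_add_im c]
    ring_nf; rw [I_sq]; ring

def wirtingerDBar (f : E → ℂ) (p : E) : E →ₗ⋆[ℂ] ℂ where
  toFun v := (fderiv ℝ f p v + I * fderiv ℝ f p (I • v)) / 2
  map_add' v w := by simp only [smul_add, map_add]; ring
  map_smul' c v := by
    rw [smul_comm, (fderiv ℝ f p).apply_complex_smul c v,
      (fderiv ℝ f p).apply_complex_smul c (I • v), smul_smul, I_mul_I, neg_one_smul,
      map_neg, smul_eq_mul]
    conv_rhs => rw [← re_add_im c]
    simp only [map_add, map_mul, conj_ofReal, conj_I]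
    ring_nf; rw [I_sq]; ring

theorem fderiv_eq_two_mul_re_wirtingerD {ρ : E → ℝ} {p : E} (hρ : DifferentiableAt ℝ ρ p)
    (v : E) : fderiv ℝ ρ p v = 2 * (wirtingerD (fun w => (ρ w : ℂ)) p v).re := by
  have h : fderiv ℝ (fun w => (ρ w : ℂ)) p = ofRealCLM.comp (fderiv ℝ ρ p) :=
    (ofRealCLM.hasFDerivAt.comp p hρ.hasFDerivAt).fderiv
  simp [wirtingerD, h]
  ring

theorem fderiv_comp_const_add_clm {G : Type*} [NormedAddCommGroup G] [NormedSpace ℝ G]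
    {f : F → G} (a : F) (T : E →L[ℂ] F) {p : E} (hf : DifferentiableAt ℝ f (a + T p)) :
    fderiv ℝ (fun w => f (a + T w)) p = (fderiv ℝ f (a + T p)).comp (T.restrictScalars ℝ) :=
  (hf.hasFDerivAt.comp p ((T.restrictScalars ℝ).hasFDerivAt.const_add a)).fderiv

theorem wirtingerD_comp_const_add_clm {f : F → ℂ} (a : F) (T : E →L[ℂ] F) {p : E}
    (hf : DifferentiableAt ℝ f (a + T p)) (v : E) :
    wirtingerD (fun w => f (a + T w)) p v = wirtingerD f (a + T p) (T v) := by
  simp [wirtingerD, fderiv_comp_const_add_clm a T hf]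

theorem wirtingerDBar_comp_const_add_clm {f : F → ℂ} (a : F) (T : E →L[ℂ] F) {p : E}
    (hf : DifferentiableAt ℝ f (a + T p)) (v : E) :
    wirtingerDBar (fun w => f (a + T w)) p v = wirtingerDBar f (a + T p) (T v) := by
  simp [wirtingerDBar, fderiv_comp_const_add_clm a T hf]

theorem ContDiff.differentiable_wirtingerDBar {f : E → ℂ} (hf : ContDiff ℝ 2 f) (v : E) :
    Differentiable ℝ (fun p => wirtingerDBar f p v) := by
  have hf' : Differentiable ℝ (fderiv ℝ f) :=
    (hf.fderiv_right (by norm_num)).differentiable one_ne_zero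
  simp only [wirtingerDBar, LinearMap.coe_mk, AddHom.coe_mk]
  fun_prop

theorem wirtingerD_sum_mul {ι : Type*} (s : Finset ι) {g : ι → E → ℂ} {p : E}
    (hg : ∀ i ∈ s, DifferentiableAt ℝ (g i) p) (c : ι → ℂ) (v : E) :
    wirtingerD (fun x => ∑ i ∈ s, g i x * c i) p v = ∑ i ∈ s, wirtingerD (g i) p v * c i := by
  have h : fderiv ℝ (fun x => ∑ i ∈ s, g i x * c i) p = ∑ i ∈ s, c i • fderiv ℝ (g i) p := by
    rw [fderiv_fun_sum fun i hi => (hg i hi).mul_const _]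
    exact Finset.sum_congr rfl fun i hi => fderiv_mul_const (hg i hi) _
  simp only [wirtingerD, LinearMap.coe_mk, AddHom.coe_mk, h, sum_apply,
    smul_apply, smul_eq_mul, Finset.mul_sum, ← Finset.sum_sub_distrib,
    Finset.sum_div]
  exact Finset.sum_congr rfl fun i _ => by ring

end Wirtinger

section Coordinates

variable {n : ℕ}

theorem wDz_eq_wirtingerD (j : Fin n) (f : (Fin n → ℂ) → ℂ) (p : Fin n → ℂ) :
    wDz j f p = wirtingerD f p (Pi.single j 1) := by
  rw [wDz, Pi.single_eq_smul_single_one j I]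
  rfl

theorem wDzBar_eq_wirtingerDBar (j : Fin n) (f : (Fin n → ℂ) → ℂ) (p : Fin n → ℂ) :
    wDzBar j f p = wirtingerDBar f p (Pi.single j 1) := by
  rw [wDzBar, Pi.single_eq_smul_single_one j I]
  rfl

theorem sum_wDz_mul (f : (Fin n → ℂ) → ℂ) (p v : Fin n → ℂ) :
    ∑ j, wDz j f p * v j = wirtingerD f p v := by
  conv_rhs => rw [← Finset.univ_sum_single v]
  simp [wDz_eq_wirtingerD, Pi.single_eq_smul_single_one _ (v _), mul_comm]

theorem sum_wDzBar_mul_conj (f : (Fin n → ℂ) → ℂ) (p v : Fin n → ℂ) :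
    ∑ j, wDzBar j f p * starRingEnd ℂ (v j) = wirtingerDBar f p v := by
  conv_rhs => rw [← Finset.univ_sum_single v]
  simp [wDzBar_eq_wirtingerDBar, Pi.single_eq_smul_single_one _ (v _), mul_comm]

theorem tangentSum_eq_wirtingerD (ρ : (Fin n → ℂ) → ℝ) (p Z : Fin n → ℂ) :
    tangentSum ρ p Z = wirtingerD (fun w => (ρ w : ℂ)) p Z :=
  sum_wDz_mul _ p Z

theorem leviForm_eq_wirtingerD_wirtingerDBar {ρ : (Fin n → ℂ) → ℝ} (hρ : ContDiff ℝ 2 ρ)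
    (p Z : Fin n → ℂ) :
    leviForm ρ p Z = wirtingerD (fun z => wirtingerDBar (fun w => (ρ w : ℂ)) z Z) p Z := by
  have hρ' : ContDiff ℝ 2 (fun w => (ρ w : ℂ)) := ofRealCLM.contDiff.comp hρ
  have hdiff (k : Fin n) : DifferentiableAt ℝ (wDzBar k (fun w => (ρ w : ℂ))) p := by
    simp_rw [funext (wDzBar_eq_wirtingerDBar k _)]
    exact (hρ'.differentiable_wirtingerDBar _).differentiableAt
  simp_rw [← sum_wDzBar_mul_conj _ _ Z, ← sum_wDz_mul, leviForm]
  refine Finset.sum_congr rfl fun j _ => ?_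
  rw [wDz_eq_wirtingerD, wirtingerD_sum_mul _ (fun k _ => hdiff k), Finset.sum_mul]
  refine Finset.sum_congr rfl fun k _ => ?_
  rw [leviEntry, wDz_eq_wirtingerD]
  ring

end Coordinates

section Affine

variable {m n : ℕ}

theorem tangentSum_comp_const_add_clm {ρ : (Fin n → ℂ) → ℝ} (a : Fin n → ℂ)
    (T : (Fin m → ℂ) →L[ℂ] (Fin n → ℂ)) {p : Fin m → ℂ} (hρ : DifferentiableAt ℝ ρ (a + T p))
    (ζ : Fin m → ℂ) :
    tangentSum (fun w => ρ (a + T w)) p ζ = tangentSum ρ (a + T p) (T ζ) := by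
  simp only [tangentSum_eq_wirtingerD]
  exact wirtingerD_comp_const_add_clm (f := fun y => (ρ y : ℂ)) a T
    (ofRealCLM.differentiableAt.comp _ hρ) ζ

theorem leviForm_comp_const_add_clm {ρ : (Fin n → ℂ) → ℝ} (hρ : ContDiff ℝ 2 ρ) (a : Fin n → ℂ)
    (T : (Fin m → ℂ) →L[ℂ] (Fin n → ℂ)) (p ζ : Fin m → ℂ) :
    leviForm (fun w => ρ (a + T w)) p ζ = leviForm ρ (a + T p) (T ζ) := by
  have hρT : ContDiff ℝ 2 (fun w => ρ (a + T w)) :=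
    hρ.comp (contDiff_const.add (T.restrictScalars ℝ).contDiff)
  have hρ' : ContDiff ℝ 2 (fun w => (ρ w : ℂ)) := ofRealCLM.contDiff.comp hρ
  have hinner : (fun z => wirtingerDBar (fun w => (ρ (a + T w) : ℂ)) z ζ)
      = fun z => wirtingerDBar (fun y => (ρ y : ℂ)) (a + T z) (T ζ) :=
    funext fun z => wirtingerDBar_comp_const_add_clm (f := fun y => (ρ y : ℂ)) a T
      (hρ'.differentiable (by norm_num) _) ζ
  rw [leviForm_eq_wirtingerD_wirtingerDBar hρT, leviForm_eq_wirtingerD_wirtingerDBar hρ, hinner]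
  exact wirtingerD_comp_const_add_clm (f := fun y => wirtingerDBar (fun w => (ρ w : ℂ)) y (T ζ))
    a T ((hρ'.differentiable_wirtingerDBar _) _) ζ

def affLinear (b c : Fin n → ℂ) : (Fin 2 → ℂ) →L[ℂ] (Fin n → ℂ) :=
  (ContinuousLinearMap.proj 0).smulRight b + (ContinuousLinearMap.proj 1).smulRight c

@[simp]
theorem affLinear_apply (b c : Fin n → ℂ) (w : Fin 2 → ℂ) :
    affLinear b c w = w 0 • b + w 1 • c :=
  rfl

theorem aff_eq_const_add_affLinear (a b c : Fin n → ℂ) :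
    aff a b c = fun w => a + affLinear b c w := by
  funext w
  simp [aff, add_assoc]

end Affine

theorem slice_not_levi_pseudoconvex_general {n : ℕ} (Ω : Set (Fin n → ℂ))
    (ρ : (Fin n → ℂ) → ℝ) (hρ : IsDefiningFunction ρ Ω) (M : Fin n → ℂ)
    (hM : M ∈ frontier Ω) (Z : Fin n → ℂ) (hZ : tangentSum ρ M Z = 0)
    (hneg : leviForm ρ M Z < 0) :
    ∃ a b c : Fin n → ℂ, LinearIndependent ℂ ![b, c] ∧
      ∃ μ : Fin 2 → ℂ, aff a b c μ = M ∧
        (∃ U ∈ nhds μ, ∀ w ∈ U, w ∈ aff a b c ⁻¹' Ω ↔ ρ (aff a b c w) < 0) ∧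
        fderiv ℝ (fun v => ρ (aff a b c v)) μ ≠ 0 ∧
        ∃ ζ : Fin 2 → ℂ, tangentSum (fun w => ρ (aff a b c w)) μ ζ = 0 ∧
          leviForm (fun w => ρ (aff a b c w)) μ ζ < 0 := by
  obtain ⟨hρC2, rfl, -, hgrad⟩ := hρ
  have hρdiff : Differentiable ℝ ρ := hρC2.differentiable (by norm_num)
  obtain ⟨b, hb⟩ : ∃ b, fderiv ℝ ρ M b ≠ 0 := by
    simpa [DFunLike.ne_iff] using hgrad M hM
  have hZ0 : Z ≠ 0 := by
    rintro rfl
    simp [leviForm] at hneg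
  have hbZ : LinearIndependent ℂ ![b, Z] := by
    refine .pair_of_apply_ne_zero_of_apply_eq_zero (wirtingerD (fun w => (ρ w : ℂ)) M) ?_
      (by rwa [← tangentSum_eq_wirtingerD]) hZ0
    intro h
    apply hb
    rw [fderiv_eq_two_mul_re_wirtingerD (hρdiff M), h]
    simp
  refine ⟨M, b, Z, hbZ, 0, by simp [aff], ⟨Set.univ, Filter.univ_mem, fun w _ => Iff.rfl⟩, ?_,
    Pi.single 1 1, ?_, ?_⟩ <;> simp only [aff_eq_const_add_affLinear]
  · rw [fderiv_comp_const_add_clm M _ (hρdiff _)]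
    intro h
    exact hb (by simpa using congrArg (· (Pi.single 0 1)) h)
  · rw [tangentSum_comp_const_add_clm M _ (hρdiff _)]
    simpa using hZ
  · rw [leviForm_comp_const_add_clm hρC2]
    simpa using hneg

/-- At a point of non-Levi-pseudoconvexity of a `C²` boundary, some 2-dimensional affine
slice through the point fails to be Levi pseudoconvex at the corresponding point. -/
theorem slice_not_levi_pseudoconvex {n : ℕ} (Ω : Set (Fin n → ℂ)) (hΩ : IsOpen Ω)
    (ρ : (Fin n → ℂ) → ℝ) (hρ : IsDefiningFunction ρ Ω) (M : Fin n → ℂ)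
    (hM : M ∈ frontier Ω) (Z : Fin n → ℂ) (hZ : tangentSum ρ M Z = 0)
    (hneg : leviForm ρ M Z < 0) :
    ∃ a b c : Fin n → ℂ, LinearIndependent ℂ ![b, c] ∧
      ∃ μ : Fin 2 → ℂ, aff a b c μ = M ∧
        (∃ U ∈ nhds μ, ∀ w ∈ U, w ∈ aff a b c ⁻¹' Ω ↔ ρ (aff a b c w) < 0) ∧
        fderiv ℝ (fun v => ρ (aff a b c v)) μ ≠ 0 ∧
        ∃ ζ : Fin 2 → ℂ, tangentSum (fun w => ρ (aff a b c w)) μ ζ = 0 ∧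
          leviForm (fun w => ρ (aff a b c w)) μ ζ < 0 :=
  slice_not_levi_pseudoconvex_general Ω ρ hρ M hM Z hZ hneg
end
end

section
/- Let q : ℂⁿ → ℝ be a real-valued quadratic polynomial with q(M) = 0 and ∇q(M) ≠ 0 at some point M, and suppose there exists Z ∈ ℂⁿ with ∑_j ∂q/∂z_j(M) Z_j = 0 and ∑_{j,k} ∂²q/∂z_j∂z̄_k(M) Z_j Z̄_k < 0. If Ω is an open set and U a neighborhood of M ∈ ∂Ω such that {z ∈ U : q(z) < 0} ⊆ Ω, then Ω is not pseudoconvex. -/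
open Complex Metric
open scoped ComplexOrder

noncomputable section

/-!
Write `q (M + u) = φ u + B u u` with `φ = dq(M)`. For `μ ∈ ℂ`, `B (μZ) (μZ) = γ |μ|² + Re (β μ²)`,
where `γ < 0` is the Levi form. As `Z` is complex tangent, a vector `N` with
`φ (μ² N) = -Re (β μ²)` and a vector `v` with `φ v = -1` give
`q (M + μZ + μ²N + tv) = γ |μ|² - t + O(|μ|³ + t |μ| + t²)`, which is negative for small `|μ|` and
small `t ≥ 0` except at `(0, 0)`. Hence for small `δ` the analytic discs
`ζ ↦ M + δζ Z + (δζ)² N + t v`, `0 < t ≤ δ`, lie in `Ω` and their boundary circles stay in a compact subset of `Ω` even for `t = 0`, while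
their centres tend to `M ∉ Ω`: the Kontinuitätssatz fails.
-/

open Filter Topology Set Function

section ComplexSpace

variable {E : Type*} [NormedAddCommGroup E] [NormedSpace ℂ E]

theorem complex_smul_eq_re_smul_add_im_smul (c : ℂ) (u : E) :
    c • u = c.re • u + c.im • (I • u) := by
  conv_lhs => rw [← Complex.re_add_im c]
  rw [add_smul, mul_smul, Complex.coe_smul, Complex.coe_smul]

theorem exists_apply_smul_eq_re {φ : E →L[ℝ] ℝ} (hφ : φ ≠ 0) :
    ∃ w : E, ∀ μ : ℂ, φ (μ • w) = μ.re := by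
  set ℓ : StrongDual ℂ E := StrongDual.extendRCLike φ
  obtain ⟨x, hx⟩ : ∃ x, φ x ≠ 0 := by
    by_contra! h
    exact hφ (ContinuousLinearMap.ext h)
  have hℓx : ℓ x ≠ 0 := fun h => hx (by
    rw [← StrongDual.re_extendRCLike_apply (𝕜 := ℂ)]
    exact congrArg RCLike.re h)
  refine ⟨(ℓ x)⁻¹ • x, fun μ => ?_⟩
  rw [← StrongDual.re_extendRCLike_apply (𝕜 := ℂ), smul_smul, map_smul, smul_eq_mul,
    mul_assoc, inv_mul_cancel₀ hℓx, mul_one]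
  rfl

/-- The restriction of a real quadratic form to a complex line splits into a multiple of `|μ|²`
(the Levi form) and a harmonic part `Re (β μ²)`. -/
theorem apply_smul_smul_self (B : E →L[ℝ] E →L[ℝ] ℝ) (Z : E) (μ : ℂ) :
    B (μ • Z) (μ • Z) = (B Z Z + B (I • Z) (I • Z)) / 2 * ‖μ‖ ^ 2
      + ((⟨(B Z Z - B (I • Z) (I • Z)) / 2, -(B Z (I • Z) + B (I • Z) Z) / 2⟩ : ℂ) * μ ^ 2).re := by
  rw [complex_smul_eq_re_smul_add_im_smul, Complex.sq_norm, Complex.normSq_apply]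
  simp only [map_add, map_smul, add_apply, smul_apply, smul_eq_mul, sq, Complex.mul_re,
    Complex.mul_im]
  ring

theorem apply_add_self_le (B : E →L[ℝ] E →L[ℝ] ℝ) (a e : E) :
    B (a + e) (a + e) ≤ B a a + ‖B‖ * ‖e‖ * (2 * ‖a‖ + ‖e‖) := by
  have hae : B a e ≤ ‖B‖ * ‖a‖ * ‖e‖ := (le_abs_self _).trans (B.le_opNorm₂ a e)
  have hea : B e a ≤ ‖B‖ * ‖e‖ * ‖a‖ := (le_abs_self _).trans (B.le_opNorm₂ e a)
  have hee : B e e ≤ ‖B‖ * ‖e‖ * ‖e‖ := (le_abs_self _).trans (B.le_opNorm₂ e e)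
  simp only [map_add, add_apply]
  linarith

/-- When `S` is the real Hessian of a function `ρ`, this is its complex Hessian `∂²ρ/∂z∂z̄`. -/
def leviSesq (S : E →L[ℝ] E →L[ℝ] ℝ) : E →ₗ[ℂ] E →ₗ⋆[ℂ] ℂ :=
  LinearMap.mk₂'ₛₗ (RingHom.id ℂ) (starRingEnd ℂ)
    (fun u w => ((S u w + S (I • u) (I • w) : ℝ) + I * (S u (I • w) - S (I • u) w : ℝ)) / 4)
    (fun u₁ u₂ w => by simp only [smul_add, map_add, add_apply]; push_cast; ring)
    (fun c u w => by
      rw [smul_eq_mul, RingHom.id_apply]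
      conv_rhs => rw [← Complex.re_add_im c]
      simp only [complex_smul_eq_re_smul_add_im_smul c, smul_add, smul_comm I, map_add, map_smul,
        add_apply, smul_apply, smul_eq_mul, smul_smul, I_mul_I, neg_one_smul, map_neg, neg_apply]
      push_cast
      ring_nf
      rw [I_sq]
      ring)
    (fun u w₁ w₂ => by simp only [smul_add, map_add]; push_cast; ring)
    (fun c u w => by
      rw [smul_eq_mul]
      conv_rhs => rw [← Complex.re_add_im c]
      simp only [complex_smul_eq_re_smul_add_im_smul c, smul_add, smul_comm I, map_add, map_smul,
        smul_eq_mul, smul_smul, I_mul_I, neg_one_smul, map_neg, map_mul, conj_ofReal, conj_I]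
      push_cast
      ring_nf
      rw [I_sq]
      ring)

theorem leviSesq_apply (S : E →L[ℝ] E →L[ℝ] ℝ) (u w : E) :
    leviSesq S u w
      = ((S u w + S (I • u) (I • w) : ℝ) + I * (S u (I • w) - S (I • u) w : ℝ)) / 4 :=
  rfl

theorem leviSesq_add_flip_apply_self (B : E →L[ℝ] E →L[ℝ] ℝ) (Z : E) :
    leviSesq (B + B.flip) Z Z = ((B Z Z + B (I • Z) (I • Z)) / 2 : ℝ) := by
  rw [leviSesq_apply]
  simp only [add_apply, ContinuousLinearMap.flip_apply]
  push_cast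
  ring

theorem exists_disc_estimate (φ : E →L[ℝ] ℝ) (B : E →L[ℝ] E →L[ℝ] ℝ) {Z N v : E} {γ : ℝ}
    (hγ : γ < 0) (hZ : ∀ μ : ℂ, φ (μ • Z + μ ^ 2 • N) + B (μ • Z) (μ • Z) = γ * ‖μ‖ ^ 2)
    (hv : φ v = -1) {ε : ℝ} (hε : 0 < ε) :
    ∃ δ > 0, ∃ κ > 0, ∀ μ : ℂ, ‖μ‖ ≤ δ → ∀ t ∈ Icc 0 δ,
      let u := μ • Z + μ ^ 2 • N + t • v
      φ u + B u u ≤ -κ * (‖μ‖ ^ 2 + t) ∧ ‖u‖ ≤ ε := by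
  obtain ⟨κ, hκ, hκγ, hκ1⟩ : ∃ κ > 0, 2 * κ ≤ -γ ∧ 2 * κ ≤ 1 :=
    ⟨min (-γ) 1 / 2, half_pos (lt_min (neg_pos.2 hγ) one_pos), by linarith [min_le_left (-γ) 1],
      by linarith [min_le_right (-γ) 1]⟩
  set C := ‖B‖ * (‖N‖ + ‖v‖) * (2 * ‖Z‖ + ‖N‖ + ‖v‖)
  set D := ‖Z‖ + ‖N‖ + ‖v‖
  have hsmall : ∀ᶠ δ in 𝓝 (0 : ℝ), δ ≤ 1 ∧ C * δ ≤ κ ∧ D * δ ≤ ε :=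
    (eventually_le_nhds one_pos).and <|
      (((continuous_const_mul C).tendsto' 0 0 (mul_zero C)).eventually (eventually_le_nhds hκ)).and
      (((continuous_const_mul D).tendsto' 0 0 (mul_zero D)).eventually (eventually_le_nhds hε))
  obtain ⟨δ, ⟨hδ1, hCδ, hDδ⟩, hδ⟩ :=
    ((hsmall.filter_mono nhdsWithin_le_nhds).and (self_mem_nhdsWithin (s := Ioi 0))).exists
  refine ⟨δ, hδ, κ, hκ, fun μ hμ t ⟨ht, htδ⟩ => ?_⟩
  set e := μ ^ 2 • N + t • v
  have hμ2 : ‖μ‖ ^ 2 ≤ δ := by nlinarith [norm_nonneg μ]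
  have he : ‖e‖ ≤ ‖μ‖ ^ 2 * ‖N‖ + t * ‖v‖ := by
    refine (norm_add_le _ _).trans_eq ?_
    rw [norm_smul, norm_smul, norm_pow, Real.norm_of_nonneg ht]
  have he₁ : ‖e‖ ≤ (‖N‖ + ‖v‖) * (‖μ‖ ^ 2 + t) := by
    nlinarith [norm_nonneg N, norm_nonneg v, sq_nonneg ‖μ‖]
  have he₂ : ‖e‖ ≤ δ * (‖N‖ + ‖v‖) := by
    nlinarith [norm_nonneg N, norm_nonneg v]
  have hμZ : ‖μ • Z‖ ≤ δ * ‖Z‖ := by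
    rw [norm_smul]
    exact mul_le_mul_of_nonneg_right hμ (norm_nonneg Z)
  have hu : μ • Z + μ ^ 2 • N + t • v = μ • Z + e := add_assoc _ _ _
  have hφu : φ (μ • Z + e) = γ * ‖μ‖ ^ 2 - B (μ • Z) (μ • Z) - t := by
    rw [← add_assoc, map_add, map_smul, hv, smul_eq_mul, ← hZ μ]
    ring
  have hrem : ‖B‖ * ‖e‖ * (2 * ‖μ • Z‖ + ‖e‖) ≤ κ * (‖μ‖ ^ 2 + t) :=
    calc ‖B‖ * ‖e‖ * (2 * ‖μ • Z‖ + ‖e‖)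
        ≤ ‖B‖ * ((‖N‖ + ‖v‖) * (‖μ‖ ^ 2 + t)) * (δ * (2 * ‖Z‖ + ‖N‖ + ‖v‖)) := by
          gcongr
          linarith
      _ = C * δ * (‖μ‖ ^ 2 + t) := by ring
      _ ≤ κ * (‖μ‖ ^ 2 + t) := by gcongr
  simp only [hu]
  constructor
  · calc φ (μ • Z + e) + B (μ • Z + e) (μ • Z + e) ≤ γ * ‖μ‖ ^ 2 - t + κ * (‖μ‖ ^ 2 + t) := by
          linarith [apply_add_self_le B (μ • Z) e]
      _ ≤ -κ * (‖μ‖ ^ 2 + t) := by nlinarith [sq_nonneg ‖μ‖]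
  · calc ‖μ • Z + e‖ ≤ ‖μ • Z‖ + ‖e‖ := norm_add_le _ _
      _ ≤ D * δ := by linarith
      _ ≤ ε := hDδ

theorem not_pseudoconvex_of_disc_family {Ω : Set E} {F : ℂ → ℝ → E} (hF : Continuous (uncurry F))
    (hF_holo : ∀ t, Differentiable ℂ (F · t)) {δ : ℝ} (hδ : 0 < δ)
    (h_disc : ∀ ζ ∈ closedBall (0 : ℂ) 1, ∀ t ∈ Ioc 0 δ, F ζ t ∈ Ω)
    (h_bdry : ∀ ζ ∈ sphere (0 : ℂ) 1, ∀ t ∈ Icc 0 δ, F ζ t ∈ Ω) (h_center : F 0 0 ∉ Ω) :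
    ¬ Pseudoconvex Ω := by
  intro hΩ
  set K := uncurry F '' (sphere 0 1 ×ˢ Icc 0 δ)
  have hK : IsCompact K := ((isCompact_sphere 0 1).prod isCompact_Icc).image hF
  have hKΩ : K ⊆ Ω := by
    rintro _ ⟨⟨ζ, t⟩, ⟨hζ, ht⟩, rfl⟩
    exact h_bdry ζ hζ t ht
  obtain ⟨K', hK', hK'Ω, hdK'⟩ := hΩ (Ioc 0 δ) (fun t => (F · t))
    (fun t => ⟨(hF_holo t).continuous.continuousOn, (hF_holo t).differentiableOn,
      by rintro _ ⟨ζ, hζ, rfl⟩; exact h_disc ζ hζ t t.2⟩)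
    K hK hKΩ
    (fun t => by rintro _ ⟨ζ, hζ, rfl⟩; exact ⟨(ζ, t), ⟨hζ, Ioc_subset_Icc_self t.2⟩, rfl⟩)
  have hcenters : ∀ᶠ t in 𝓝[>] 0, F 0 t ∈ K' := by
    filter_upwards [Ioc_mem_nhdsGT hδ] with t ht
    exact hdK' ⟨t, ht⟩ ⟨0, mem_closedBall_self zero_le_one, rfl⟩
  have hlim : Tendsto (F 0) (𝓝[>] 0) (𝓝 (F 0 0)) :=
    ((hF.comp (Continuous.prodMk_right 0)).tendsto 0).mono_left nhdsWithin_le_nhds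
  exact h_center (hK'Ω (hK'.isClosed.mem_of_tendsto hlim hcenters))

theorem not_pseudoconvex_of_levi_neg {Ω : Set E} (hΩ : IsOpen Ω) {M : E} (hM : M ∈ frontier Ω)
    {U : Set E} (hU : U ∈ 𝓝 M) {q : E → ℝ} (hsub : {z ∈ U | q z < 0} ⊆ Ω)
    {φ : E →L[ℝ] ℝ} {B : E →L[ℝ] E →L[ℝ] ℝ} (hq : ∀ u, q (M + u) = φ u + B u u) (hφ : φ ≠ 0)
    {Z : E} (hZ : ∀ μ : ℂ, φ (μ • Z) = 0) (hlevi : B Z Z + B (I • Z) (I • Z) < 0) :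
    ¬ Pseudoconvex Ω := by
  obtain ⟨w, hw⟩ := exists_apply_smul_eq_re hφ
  set β : ℂ := ⟨(B Z Z - B (I • Z) (I • Z)) / 2, -(B Z (I • Z) + B (I • Z) Z) / 2⟩
  have hcancel : ∀ μ : ℂ, φ (μ • Z + μ ^ 2 • (-β) • w) + B (μ • Z) (μ • Z)
      = (B Z Z + B (I • Z) (I • Z)) / 2 * ‖μ‖ ^ 2 := by
    intro μ
    rw [map_add, hZ, smul_smul, hw, apply_smul_smul_self]
    simp only [β, Complex.mul_re, Complex.neg_re, Complex.neg_im]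
    ring
  obtain ⟨ε, hε, hεU⟩ := nhds_basis_closedBall.mem_iff.mp hU
  obtain ⟨δ, hδ, κ, hκ, hest⟩ :=
    exists_disc_estimate φ B (by linarith) hcancel (v := -w) (by simpa using hw 1) hε
  set F : ℂ → ℝ → E := fun ζ t => M + ((δ * ζ : ℂ) • Z + (δ * ζ : ℂ) ^ 2 • (-β) • w + t • -w)
  have hF : ∀ ζ ∈ closedBall (0 : ℂ) 1, ∀ t ∈ Icc 0 δ,
      F ζ t ∈ U ∧ q (F ζ t) ≤ -κ * (‖(δ * ζ : ℂ)‖ ^ 2 + t) := by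
    intro ζ hζ t ht
    have hδζ : ‖(δ * ζ : ℂ)‖ ≤ δ := by
      rw [norm_mul, Complex.norm_real, Real.norm_of_nonneg hδ.le]
      exact mul_le_of_le_one_right hδ.le (mem_closedBall_zero_iff.mp hζ)
    obtain ⟨hqF, hFε⟩ := hest _ hδζ t ht
    exact ⟨hεU (by simpa [F, dist_eq_norm] using hFε), by simpa [F, hq] using hqF⟩
  have hFΩ : ∀ ζ ∈ closedBall (0 : ℂ) 1, ∀ t ∈ Icc 0 δ,
      0 < ‖(δ * ζ : ℂ)‖ ^ 2 + t → F ζ t ∈ Ω :=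
    fun ζ hζ t ht hpos => hsub ⟨(hF ζ hζ t ht).1, (hF ζ hζ t ht).2.trans_lt (by nlinarith)⟩
  refine not_pseudoconvex_of_disc_family (F := F) (by fun_prop) (fun t => by fun_prop) hδ
    (fun ζ hζ t ht =>
      hFΩ ζ hζ t (Ioc_subset_Icc_self ht) (add_pos_of_nonneg_of_pos (sq_nonneg _) ht.1))
    (fun ζ hζ t ht =>
      hFΩ ζ (sphere_subset_closedBall hζ) t ht (add_pos_of_pos_of_nonneg ?_ ht.1)) ?_
  · simp [mem_sphere_zero_iff_norm.mp hζ, abs_of_pos hδ, hδ]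
  · simpa [F] using (hΩ.frontier_eq ▸ hM).2

end ComplexSpace

theorem hasFDerivAt_quadratic {F : Type*} [NormedAddCommGroup F] [NormedSpace ℝ F]
    (B : F →L[ℝ] F →L[ℝ] ℝ) (L : F →L[ℝ] ℝ) (c : ℝ) (z : F) :
    HasFDerivAt (fun z => B z z + L z + c) (B z + B.flip z + L) z := by
  have hB : HasFDerivAt (fun z => B z z) (B z + B.flip z) z :=
    (B.hasFDerivAt.clm_apply (hasFDerivAt_id z)).congr_fderiv (by ext; simp)
  exact (hB.add L.hasFDerivAt).add_const c

theorem HasFDerivAt.ofReal_comp {F : Type*} [NormedAddCommGroup F] [NormedSpace ℝ F]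
    {f : F → ℝ} {f' : F →L[ℝ] ℝ} {x : F} (hf : HasFDerivAt f f' x) :
    HasFDerivAt (fun y => (f y : ℂ)) (ofRealCLM.comp f') x :=
  ofRealCLM.hasFDerivAt.comp x hf

section Wirtinger

variable {n : ℕ}

theorem pi_single_I_eq_smul (j : Fin n) : (Pi.single j I : Fin n → ℂ) = I • Pi.single j 1 := by
  rw [← Pi.single_smul', smul_eq_mul, mul_one]

theorem wDz_ofReal {ρ : (Fin n → ℂ) → ℝ} {p : Fin n → ℂ} (hρ : DifferentiableAt ℝ ρ p)
    (j : Fin n) :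
    wDz j (fun w => (ρ w : ℂ)) p = StrongDual.extendRCLike (fderiv ℝ ρ p) (Pi.single j 1) / 2 := by
  rw [wDz, hρ.hasFDerivAt.ofReal_comp.fderiv, StrongDual.extendRCLike_apply, pi_single_I_eq_smul]
  rfl

theorem tangentSum_eq_extendRCLike {ρ : (Fin n → ℂ) → ℝ} {p : Fin n → ℂ}
    (hρ : DifferentiableAt ℝ ρ p) (Z : Fin n → ℂ) :
    tangentSum ρ p Z = StrongDual.extendRCLike (fderiv ℝ ρ p) Z / 2 := by
  conv_rhs => rw [pi_eq_sum_univ' Z]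
  simp only [tangentSum, wDz_ofReal hρ, map_sum, map_smul, smul_eq_mul, Finset.sum_div]
  exact Finset.sum_congr rfl fun j _ => by ring

theorem sum_apply_single_single_mul (H : (Fin n → ℂ) →ₗ[ℂ] (Fin n → ℂ) →ₗ⋆[ℂ] ℂ)
    (Z : Fin n → ℂ) :
    ∑ j, ∑ k, H (Pi.single j 1) (Pi.single k 1) * Z j * starRingEnd ℂ (Z k) = H Z Z := by
  conv_rhs => rw [pi_eq_sum_univ' Z]
  simp only [map_sum, map_smul, map_smulₛₗ, LinearMap.sum_apply, LinearMap.smul_apply,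
    smul_eq_mul, Finset.mul_sum]
  rw [Finset.sum_comm]
  exact Finset.sum_congr rfl fun j _ => Finset.sum_congr rfl fun k _ => by ring

theorem leviEntry_quadratic (B : (Fin n → ℂ) →L[ℝ] (Fin n → ℂ) →L[ℝ] ℝ)
    (L : (Fin n → ℂ) →L[ℝ] ℝ) (c : ℝ) (j k : Fin n) (p : Fin n → ℂ) :
    leviEntry j k (fun z => B z z + L z + c) p
      = leviSesq (B + B.flip) (Pi.single j 1) (Pi.single k 1) := by
  set S := B + B.flip
  set e : Fin n → ℂ := Pi.single k 1
  set T : (Fin n → ℂ) →L[ℝ] ℂ :=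
    (2⁻¹ : ℂ) • (ofRealCLM.comp (S.flip e) + I • ofRealCLM.comp (S.flip (I • e)))
  have hbar : (fun z => wDzBar k (fun w => ((B w w + L w + c : ℝ) : ℂ)) z)
      = fun z => T z + ((L e : ℂ) + I * L (I • e)) / 2 := by
    ext z
    rw [wDzBar, (hasFDerivAt_quadratic B L c z).ofReal_comp.fderiv, pi_single_I_eq_smul]
    simp only [T, S, ContinuousLinearMap.comp_add, add_apply, ContinuousLinearMap.comp_apply,
      ofRealCLM_apply, ContinuousLinearMap.flip_apply, smul_add, ContinuousLinearMap.flip_add,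
      ContinuousLinearMap.flip_flip, smul_apply, smul_eq_mul]
    ring
  rw [leviEntry, hbar, wDz, (T.hasFDerivAt.add_const _).fderiv, pi_single_I_eq_smul,
    leviSesq_apply]
  simp only [T, S, smul_apply, add_apply, ContinuousLinearMap.comp_apply,
    ContinuousLinearMap.flip_apply, ofRealCLM_apply, smul_eq_mul]
  push_cast
  ring_nf
  rw [I_sq]
  ring

theorem leviForm_quadratic (B : (Fin n → ℂ) →L[ℝ] (Fin n → ℂ) →L[ℝ] ℝ)
    (L : (Fin n → ℂ) →L[ℝ] ℝ) (c : ℝ) (p Z : Fin n → ℂ) :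
    leviForm (fun z => B z z + L z + c) p Z = ((B Z Z + B (I • Z) (I • Z)) / 2 : ℝ) := by
  simp only [leviForm, leviEntry_quadratic, sum_apply_single_single_mul,
    leviSesq_add_flip_apply_self]

end Wirtinger

/-- Converse part of Hörmander's theorem: if a quadratic polynomial `q` supports `Ω` at a
boundary point `M` and has negative Levi form on a complex tangent vector at `M`, then `Ω`
is not pseudoconvex. -/
theorem not_pseudoconvex_of_quadratic {n : ℕ} (q : (Fin n → ℂ) → ℝ) (hq : IsQuadratic q)
    (M : Fin n → ℂ) (hqM : q M = 0) (hgrad : fderiv ℝ q M ≠ 0) (Z : Fin n → ℂ)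
    (hZ : tangentSum q M Z = 0) (hneg : leviForm q M Z < 0)
    (Ω : Set (Fin n → ℂ)) (hΩ : IsOpen Ω) (hM : M ∈ frontier Ω)
    (U : Set (Fin n → ℂ)) (hU : U ∈ nhds M) (hsub : {z ∈ U | q z < 0} ⊆ Ω) :
    ¬ Pseudoconvex Ω := by
  obtain ⟨B, L, c, hB⟩ := hq
  obtain rfl : q = fun z => B z z + L z + c := funext hB
  set φ := fderiv ℝ (fun z => B z z + L z + c) M
  have hφ : φ = B M + B.flip M + L := (hasFDerivAt_quadratic B L c M).fderiv
  have hexpand (u : Fin n → ℂ) : B (M + u) (M + u) + L (M + u) + c = φ u + B u u := by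
    simp only [hφ, map_add, add_apply, ContinuousLinearMap.flip_apply] at hqM ⊢
    linarith
  have htangent (μ : ℂ) : φ (μ • Z) = 0 := by
    rw [tangentSum_eq_extendRCLike (hasFDerivAt_quadratic B L c M).differentiableAt,
      div_eq_zero_iff, or_iff_left two_ne_zero] at hZ
    rw [← StrongDual.re_extendRCLike_apply (𝕜 := ℂ), map_smul, hZ, smul_zero]
    rfl
  have hlevi : B Z Z + B (I • Z) (I • Z) < 0 := by
    rw [leviForm_quadratic] at hneg
    have : (B Z Z + B (I • Z) (I • Z)) / 2 < 0 := by exact_mod_cast hneg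
    linarith
  exact not_pseudoconvex_of_levi_neg hΩ hM hU hsub hexpand hgrad htangent hlevi
end
end
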